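/- Let $y_1, \dots, y_N \in [-1/2, 1/2)$ be pairwise distinct nodes, $x_1, \dots, x_N \in [-1/2, 1/2)$ nodes with $\{x_l\} \cap \{y_j\} = \emptyset$, and let $f$ be a trigonometric polynomial $f(x) = \sum_{k=-N/2}^{N/2-1} \hat{f}_k e^{2\pi i k x}$. Define $f_j = f(y_j)$, $g_l = f(x_l)$, $a_l = \prod_{n=1}^{N} \sin(\pi(x_l - y_n))$, and $b_j = \prod_{n \ne j} \sin(\pi(y_j - y_n))^{-1}$. Then for all $l = 1, \dots, N$: $g_l = a_l \sum_{j=1}^N f_j b_j \left( \cot(\pi(x_l - y_j)) - i \right)$. -/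

import Mathlib

/-!
Multiplying `f` by `e^{πiNt}` turns it into a polynomial of degree `< N` in `z = e^{2πit}`, so
Lagrange interpolation at the `N` distinct points `e^{2πi y_j}` reproduces it. Since
`e^{2ia} - e^{2ib} = 2i e^{ia} e^{ib} sin(a - b)`, each Lagrange factor
`(z - z_n) / (z_j - z_n)` is `e^{πi(x - y_j)} sin(π(x - y_n)) / sin(π(y_j - y_n))`; collecting the
phases leaves `e^{-πi(x - y_j)} = (cot(π(x - y_j)) - i) sin(π(x - y_j))`.
-/

open Complex Finset

open Polynomial
open scoped Real

theorem Lagrange.eval_basis {F ι : Type*} [Field F] [DecidableEq ι] (s : Finset ι) (v : ι → F)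
    (i : ι) (z : F) :
    (Lagrange.basis s v i).eval z = ∏ j ∈ s.erase i, (z - v j) / (v i - v j) := by
  simp only [Lagrange.basis, Lagrange.basisDivisor, eval_prod, eval_mul, eval_C, eval_sub, eval_X]
  exact prod_congr rfl fun _ _ => inv_mul_eq_div _ _

theorem Polynomial.eval_eq_sum_mul_prod_div {F ι : Type*} [Field F] [DecidableEq ι]
    {s : Finset ι} {v : ι → F} (hvs : Set.InjOn v s) {f : F[X]} (hf : f.degree < #s) (z : F) :
    f.eval z = ∑ i ∈ s, f.eval (v i) * ∏ j ∈ s.erase i, (z - v j) / (v i - v j) := by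
  conv_lhs => rw [Lagrange.eq_interpolate hvs hf]
  simp only [Lagrange.interpolate_apply, eval_finsetSum, eval_mul, eval_C, Lagrange.eval_basis]

theorem Complex.exp_two_mul_I_sub_exp_two_mul_I (a b : ℂ) :
    cexp (2 * a * I) - cexp (2 * b * I) = 2 * I * cexp (a * I) * cexp (b * I) * sin (a - b) := by
  have ha : cexp (2 * a * I) = cexp (a * I) ^ 2 := by rw [sq, ← exp_add]; ring_nf
  have hb : cexp (2 * b * I) = cexp (b * I) ^ 2 := by rw [sq, ← exp_add]; ring_nf
  have hab : cexp ((a - b) * I) = cexp (a * I) / cexp (b * I) := by rw [sub_mul, exp_sub]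
  have hba : cexp (-(a - b) * I) = cexp (b * I) / cexp (a * I) := by
    rw [← exp_sub]; ring_nf
  have hu := exp_ne_zero (a * I)
  have hv := exp_ne_zero (b * I)
  rw [Complex.sin, hab, hba, ha, hb]
  generalize cexp (a * I) = u at hu ⊢
  generalize cexp (b * I) = v at hv ⊢
  field_simp
  linear_combination (u ^ 2 - v ^ 2) * I_sq

theorem Complex.inv_tan_sub_I_mul_sin {z : ℂ} (hz : sin z ≠ 0) :
    ((tan z)⁻¹ - I) * sin z = cexp (-z * I) := by
  rw [tan_eq_sin_div_cos, inv_div, sub_mul, div_mul_cancel₀ _ hz, exp_mul_I, cos_neg, sin_neg]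
  ring

theorem prod_exp_sub_div_exp_sub {ι : Type*} (t : Finset ι) (x p : ℂ) (y : ι → ℂ) :
    ∏ n ∈ t, (cexp (2 * x * I) - cexp (2 * y n * I)) / (cexp (2 * p * I) - cexp (2 * y n * I))
      = (cexp (x * I) / cexp (p * I)) ^ #t * ∏ n ∈ t, sin (x - y n) / sin (p - y n) := by
  rw [← prod_const, ← prod_mul_distrib]
  refine prod_congr rfl fun n _ => ?_
  have hn : 2 * I * cexp (y n * I) ≠ 0 := by simp [exp_ne_zero]
  rw [exp_two_mul_I_sub_exp_two_mul_I, exp_two_mul_I_sub_exp_two_mul_I, ← mul_div_mul_comm,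
    ← mul_div_mul_right (cexp (x * I) * sin (x - y n)) _ hn]
  ring

noncomputable def trigPoly {N : ℕ} (c : Fin N → ℂ) (t : ℝ) : ℂ :=
  ∑ k : Fin N, c k * cexp (2 * π * I * (((k : ℝ) - (N : ℝ) / 2) * t))

theorem trigPoly_mul_exp_pow {N : ℕ} (c : Fin N → ℂ) (t : ℝ) :
    trigPoly c t * cexp (π * t * I) ^ N
      = (∑ k : Fin N, C (c k) * X ^ (k : ℕ)).eval (cexp (2 * (π * t) * I)) := by
  rw [trigPoly, sum_mul, eval_finsetSum]
  refine sum_congr rfl fun k _ => ?_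
  rw [eval_mul, eval_C, eval_pow, eval_X, mul_assoc, ← exp_nat_mul, ← exp_nat_mul, ← exp_add]
  congr 2
  push_cast
  ring

theorem trigPoly_eq_sum_mul_prod_sin_div_sin {N : ℕ} (c : Fin N → ℂ) (y : Fin N → ℝ)
    (hy : ∀ j n, j ≠ n → Real.sin (π * (y j - y n)) ≠ 0) (x : ℝ) :
    trigPoly c x = ∑ j, trigPoly c (y j) * cexp (-(π * (x - y j)) * I) *
      ∏ n ∈ univ.erase j, sin (π * (x - y n)) / sin (π * (y j - y n)) := by
  rcases N with _ | M
  · simp [trigPoly]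
  have hinj : Set.InjOn (fun j => cexp (2 * (π * y j) * I)) (univ : Finset (Fin (M + 1))) := by
    intro j _ n _ hjn
    by_contra hne
    have h := exp_two_mul_I_sub_exp_two_mul_I (π * y j) (π * y n)
    rw [show cexp (2 * (π * y j) * I) = cexp (2 * (π * y n) * I) from hjn, sub_self, eq_comm] at h
    simp only [mul_eq_zero, OfNat.ofNat_ne_zero, I_ne_zero, exp_ne_zero, false_or, ← mul_sub] at h
    exact hy j n hne (by exact_mod_cast h)
  have hL := eval_eq_sum_mul_prod_div hinj (by simpa using degree_sum_fin_lt c)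
    (cexp (2 * (π * x) * I))
  simp only [← trigPoly_mul_exp_pow, prod_exp_sub_div_exp_sub, card_erase_of_mem (mem_univ _),
    card_univ, Fintype.card_fin, Nat.add_sub_cancel] at hL
  have hwx : cexp (π * x * I) ≠ 0 := exp_ne_zero _
  rw [← mul_left_inj' (pow_ne_zero (M + 1) hwx), hL, sum_mul]
  refine sum_congr rfl fun j _ => ?_
  have hwy : cexp (π * y j * I) ≠ 0 := exp_ne_zero _
  rw [show -(π * (x - y j)) * I = π * y j * I - π * x * I by ring, exp_sub]
  simp only [mul_sub]
  generalize cexp (π * x * I) = u at hwx ⊢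
  generalize cexp (π * y j * I) = v at hwy ⊢
  rw [div_pow, pow_succ, pow_succ]
  field_simp

theorem stmt2_general (N : ℕ)
    (y x : Fin N → ℝ)
    (hyy : ∀ j n, j ≠ n → Real.sin (Real.pi * (y j - y n)) ≠ 0)
    (hxy : ∀ l n, Real.sin (Real.pi * (x l - y n)) ≠ 0)
    (fhat : Fin N → ℂ)
    (f : ℝ → ℂ)
    (hf : ∀ t : ℝ, f t = ∑ k : Fin N,
      fhat k * Complex.exp (2 * Real.pi * Complex.I * (((k : ℝ) - (N : ℝ) / 2) * t)))
    (fj g : Fin N → ℂ) (hfj : ∀ j, fj j = f (y j)) (hg : ∀ l, g l = f (x l))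
    (a b : Fin N → ℝ)
    (ha : ∀ l, a l = ∏ n : Fin N, Real.sin (Real.pi * (x l - y n)))
    (hb : ∀ j, b j = ∏ n ∈ Finset.univ.erase j, (Real.sin (Real.pi * (y j - y n)))⁻¹) :
    ∀ l, g l = (a l : ℂ) * ∑ j : Fin N, fj j * (b j : ℂ) *
      (((Real.tan (Real.pi * (x l - y j)))⁻¹ : ℝ) - Complex.I) := by
  intro l
  have hf' : f = trigPoly fhat := funext hf
  rw [hg, hf', trigPoly_eq_sum_mul_prod_sin_div_sin fhat y hyy, ha, mul_sum]
  refine sum_congr rfl fun j _ => ?_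
  have hsin : sin (π * (x l - y j)) ≠ 0 := by exact_mod_cast hxy l j
  rw [hfj, hf', hb, ← mul_prod_erase univ _ (mem_univ j), ← inv_tan_sub_I_mul_sin hsin]
  push_cast
  rw [prod_div_distrib, prod_inv_distrib]
  ring

/-- Lagrange interpolation formula relating two evaluations of a
trigonometric polynomial:
`g_l = a_l ∑_j f_j b_j (cot(π(x_l - y_j)) - i)`. -/
theorem stmt2 (N : ℕ) (hNpos : 0 < N) (hNeven : Even N)
    (y x : Fin N → ℝ)
    (hy : ∀ j, y j ∈ Set.Ico (-(1/2 : ℝ)) (1/2))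
    (hx : ∀ l, x l ∈ Set.Ico (-(1/2 : ℝ)) (1/2))
    (hyy : ∀ j n, j ≠ n → Real.sin (Real.pi * (y j - y n)) ≠ 0)
    (hxy : ∀ l n, Real.sin (Real.pi * (x l - y n)) ≠ 0)
    (fhat : Fin N → ℂ)
    (f : ℝ → ℂ)
    (hf : ∀ t : ℝ, f t = ∑ k : Fin N,
      fhat k * Complex.exp (2 * Real.pi * Complex.I * (((k : ℝ) - (N : ℝ) / 2) * t)))
    (fj g : Fin N → ℂ) (hfj : ∀ j, fj j = f (y j)) (hg : ∀ l, g l = f (x l))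
    (a b : Fin N → ℝ)
    (ha : ∀ l, a l = ∏ n : Fin N, Real.sin (Real.pi * (x l - y n)))
    (hb : ∀ j, b j = ∏ n ∈ Finset.univ.erase j, (Real.sin (Real.pi * (y j - y n)))⁻¹) :
    ∀ l, g l = (a l : ℂ) * ∑ j : Fin N, fj j * (b j : ℂ) *
      (((Real.tan (Real.pi * (x l - y j)))⁻¹ : ℝ) - Complex.I) :=
  stmt2_general N y x hyy hxy fhat f hf fj g hfj hg a b ha hb
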